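/- arXiv:2211.09634 — 2 statements merged into one kernel-verified Lean document; each statement's English description precedes it below -/
import Mathlib

section
/- Let x₁,…,x_m be points in a metric space with pairwise distances at least α > 0, and p₁,…,p_m ∈ ℝ. Then there exists an L-Lipschitz function f: X → ℝ with f(x_i) = p_i for all i, where L = (2/α)·min_{C ∈ ℝ} max_i |p_i − C|. -/
/-- Existence of an `L`-Lipschitz interpolation of values `p i` at `α`-separated points,
with `L = (2/α) · inf_{C ∈ ℝ} max_i |p i − C|`. -/
theorem lipschitz_interpolation_exists
    {X : Type*} [MetricSpace X] (m : ℕ) (hm : 1 ≤ m)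
    (xs : Fin m → X) (p : Fin m → ℝ) (α : ℝ) (hα : 0 < α)
    (hsep : ∀ i j : Fin m, i ≠ j → α ≤ dist (xs i) (xs j))
    (L : ℝ)
    (hL : L = (2 / α) * ⨅ C : ℝ, Finset.univ.sup' (Finset.univ_nonempty_iff.mpr ⟨⟨0, hm⟩⟩)
      (fun i => |p i - C|)) :
    ∃ f : X → ℝ, (∀ i, f (xs i) = p i) ∧ (∀ u v : X, |f u - f v| ≤ L * dist u v) := by
  have hne : (Finset.univ : Finset (Fin m)).Nonempty := Finset.univ_nonempty_iff.mpr ⟨⟨0, hm⟩⟩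
  set M := Finset.univ.sup' hne p with hMdef
  set μ := Finset.univ.inf' hne p with hμdef
  set C₀ : ℝ := (M + μ) / 2 with hC₀
  set R : ℝ := (M - μ) / 2 with hRdef
  have hpM : ∀ i, p i ≤ M := fun i => Finset.le_sup' p (Finset.mem_univ i)
  have hμp : ∀ i, μ ≤ p i := fun i => Finset.inf'_le p (Finset.mem_univ i)
  have hμM : μ ≤ M := le_trans (hμp ⟨0, hm⟩) (hpM ⟨0, hm⟩)
  have hR0 : (0:ℝ) ≤ R := by rw [hRdef]; linarith
  have hbound : ∀ i, |p i - C₀| ≤ R := by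
    intro i
    rw [abs_le]
    constructor
    · have := hμp i; rw [hC₀, hRdef]; linarith
    · have := hpM i; rw [hC₀, hRdef]; linarith
  -- compute the infimum
  have hinf : (⨅ C : ℝ, Finset.univ.sup' hne (fun i => |p i - C|)) = R := by
    have hbdd : BddBelow (Set.range fun C : ℝ => Finset.univ.sup' hne (fun i => |p i - C|)) := by
      refine ⟨0, fun x hx => ?_⟩
      obtain ⟨C, rfl⟩ := hx
      exact le_trans (abs_nonneg (p ⟨0, hm⟩ - C))
        (Finset.le_sup' (fun i => |p i - C|) (Finset.mem_univ ⟨0, hm⟩))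
    apply le_antisymm
    · refine le_trans (ciInf_le hbdd C₀) ?_
      exact Finset.sup'_le _ _ fun i _ => hbound i
    · apply le_ciInf
      intro C
      obtain ⟨iM, _, hiM⟩ := Finset.exists_mem_eq_sup' hne p
      obtain ⟨iμ, _, hiμ⟩ := Finset.exists_mem_eq_inf' hne p
      have h1 : |p iM - C| ≤ Finset.univ.sup' hne (fun i => |p i - C|) :=
        Finset.le_sup' (fun i => |p i - C|) (Finset.mem_univ iM)
      have h2 : |p iμ - C| ≤ Finset.univ.sup' hne (fun i => |p i - C|) :=
        Finset.le_sup' (fun i => |p i - C|) (Finset.mem_univ iμ)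
      have h3 := le_abs_self (p iM - C)
      have h4 := neg_abs_le (p iμ - C)
      rw [hRdef, hMdef, hiM, hμdef, hiμ]
      linarith
  have hL' : L = (2 / α) * R := by rw [hL]; rw [hinf]
  have hL0 : 0 ≤ L := by
    rw [hL']; positivity
  -- the tent functions
  set φ : ℝ → ℝ := fun t => max (1 - 2 * t / α) 0 with hφ
  set g : Fin m → X → ℝ := fun i u => (p i - C₀) * φ (dist u (xs i)) with hg
  have hφ01 : ∀ t : ℝ, 0 ≤ t → 0 ≤ φ t ∧ φ t ≤ 1 := by
    intro t ht
    constructor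
    · exact le_max_right _ _
    · apply max_le
      · have : 0 ≤ 2 * t / α := by positivity
        linarith
      · linarith
  have hφzero : ∀ t : ℝ, α / 2 ≤ t → φ t = 0 := by
    intro t ht
    apply max_eq_right
    have h1 : (1:ℝ) ≤ 2 * t / α := by rw [le_div_iff₀ hα]; linarith
    linarith
  have hφlip : ∀ s t : ℝ, |φ s - φ t| ≤ (2 / α) * |s - t| := by
    intro s t
    have h := abs_max_sub_max_le_abs (1 - 2 * s / α) (1 - 2 * t / α) 0
    calc |φ s - φ t| ≤ |(1 - 2 * s / α) - (1 - 2 * t / α)| := h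
      _ = (2 / α) * |s - t| := by
          have he : (1 - 2 * s / α) - (1 - 2 * t / α) = (2 / α) * (t - s) := by ring
          rw [he, abs_mul, abs_of_pos (show (0:ℝ) < 2 / α by positivity), abs_sub_comm]
  -- single-term Lipschitz bound
  have hglip : ∀ i (u v : X), |g i u - g i v| ≤ L * dist u v := by
    intro i u v
    have : g i u - g i v = (p i - C₀) * (φ (dist u (xs i)) - φ (dist v (xs i))) := by
      rw [hg]; ring
    rw [this, abs_mul]
    have h1 := hφlip (dist u (xs i)) (dist v (xs i))
    have h2 : |dist u (xs i) - dist v (xs i)| ≤ dist u v := abs_dist_sub_le u v (xs i)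
    have h3 := hbound i
    have h4 : (0:ℝ) ≤ 2 / α := by positivity
    calc |p i - C₀| * |φ (dist u (xs i)) - φ (dist v (xs i))|
        ≤ R * ((2 / α) * dist u v) := by
          apply mul_le_mul h3 (le_trans h1 (by nlinarith [abs_nonneg (dist u (xs i) - dist v (xs i))]))
            (abs_nonneg _) hR0
      _ = L * dist u v := by rw [hL']; ring
  -- uniqueness of active index
  have huniq : ∀ (u : X) (i j : Fin m), dist u (xs i) < α / 2 → dist u (xs j) < α / 2 → i = j := by
    intro u i j hi hj
    by_contra hij
    have h := hsep i j hij
    have := dist_triangle (xs i) u (xs j)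
    rw [dist_comm (xs i) u] at this
    linarith
  -- sum collapse
  have hsum : ∀ (u : X) (i : Fin m), dist u (xs i) < α / 2 → (∑ j, g j u) = g i u := by
    intro u i hi
    apply Finset.sum_eq_single_of_mem i (Finset.mem_univ i)
    intro j _ hji
    have hj : α / 2 ≤ dist u (xs j) := by
      by_contra h
      exact hji (huniq u j i (lt_of_not_ge h) hi)
    rw [hg]
    simp only
    rw [hφzero _ hj, mul_zero]
  have hgzero : ∀ (u : X) (i : Fin m), ¬ dist u (xs i) < α / 2 → g i u = 0 := by
    intro u i h
    rw [hg]; simp only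
    rw [hφzero _ (le_of_not_gt h), mul_zero]
  -- bound on active tent value
  have hgbd : ∀ (u : X) (i : Fin m), dist u (xs i) < α / 2 →
      |g i u| ≤ (L / 2) * (α - 2 * dist u (xs i)) := by
    intro u i hi
    have hφval : φ (dist u (xs i)) = 1 - 2 * dist u (xs i) / α := by
      apply max_eq_left
      have : 2 * dist u (xs i) / α ≤ 1 := by
        rw [div_le_one hα]; linarith
      linarith
    have hφnn : (0:ℝ) ≤ 1 - 2 * dist u (xs i) / α := by
      have : 2 * dist u (xs i) / α ≤ 1 := by rw [div_le_one hα]; linarith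
      linarith
    have hgu : |g i u| = |p i - C₀| * (1 - 2 * dist u (xs i) / α) := by
      rw [hg]; simp only
      rw [abs_mul, hφval, abs_of_nonneg hφnn]
    rw [hgu]
    have h3 := hbound i
    calc |p i - C₀| * (1 - 2 * dist u (xs i) / α)
        ≤ R * (1 - 2 * dist u (xs i) / α) := by
          apply mul_le_mul_of_nonneg_right h3
          have : 2 * dist u (xs i) / α ≤ 1 := by rw [div_le_one hα]; linarith
          linarith
      _ = (L / 2) * (α - 2 * dist u (xs i)) := by
          rw [hL']
          field_simp
  refine ⟨fun u => C₀ + ∑ i, g i u, ?_, ?_⟩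
  · intro i
    simp only
    have hcollapse : (∑ j, g j (xs i)) = g i (xs i) := by
      apply hsum
      rw [dist_self]; linarith
    rw [hcollapse, hg]
    simp only [dist_self]
    have hφ0 : φ 0 = 1 := by
      rw [hφ]; simp only
      norm_num
    rw [hφ0]
    ring
  · intro u v
    simp only [add_sub_add_left_eq_sub]
    by_cases hu : ∃ i, dist u (xs i) < α / 2
    · obtain ⟨i, hi⟩ := hu
      by_cases hv : ∃ j, dist v (xs j) < α / 2
      · obtain ⟨j, hj⟩ := hv
        rw [hsum u i hi, hsum v j hj]
        by_cases hij : i = j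
        · subst hij; exact hglip i u v
        · -- cross case
          have hd : α ≤ dist u (xs i) + dist u v + dist v (xs j) := by
            have h := hsep i j hij
            have t1 := dist_triangle (xs i) u (xs j)
            have t2 := dist_triangle u v (xs j)
            rw [dist_comm (xs i) u] at t1
            rw [dist_comm v (xs j)] at t2
            linarith [dist_comm (xs j) v ▸ t2]
          have b1 := hgbd u i hi
          have b2 := hgbd v j hj
          have habs : |g i u - g j v| ≤ |g i u| + |g j v| := abs_sub _ _
          have : |g i u| + |g j v| ≤ L * dist u v := by
            have : (L / 2) * (α - 2 * dist u (xs i)) + (L / 2) * (α - 2 * dist v (xs j))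
                ≤ L * dist u v := by nlinarith
            linarith
          linarith
      · push_neg at hv
        have hv0 : (∑ j, g j v) = g i v := by
          have : ∀ j, g j v = 0 := fun j => hgzero v j (not_lt_of_ge (hv j))
          rw [Finset.sum_eq_zero (fun j _ => this j), this i]
        rw [hsum u i hi, hv0]
        exact hglip i u v
    · push_neg at hu
      have hu0 : (∑ j, g j u) = 0 :=
        Finset.sum_eq_zero (fun j _ => hgzero u j (not_lt_of_ge (hu j)))
      by_cases hv : ∃ j, dist v (xs j) < α / 2
      · obtain ⟨j, hj⟩ := hv
        have : (∑ i, g i u) = g j u := by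
          rw [hu0, hgzero u j (not_lt_of_ge (hu j))]
        rw [this, hsum v j hj]
        exact hglip j u v
      · push_neg at hv
        have hv0 : (∑ j, g j v) = 0 :=
          Finset.sum_eq_zero (fun j _ => hgzero v j (not_lt_of_ge (hv j)))
        rw [hu0, hv0]
        simp only [sub_zero, abs_zero]
        positivity
end

section
/- For d ≥ 20 and h with d ≤ h ≤ O(e^d), setting m = h/10, there exist unit vectors x¹,…,x^m ∈ S^{d−1} and matrices A¹,…,A^{2^m} ∈ ℝ^{h×d} such that ‖A^s‖_F² ≤ 2d for all s ∈ [2^m], and ‖A^s x^i − A^t x^j‖² ≥ 1/16 for all (s,i) ≠ (t,j). -/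
/-!
The construction is explicit up to two packings. With `a² = 1/2`, put
`x^i = (a, y_i, 0)` and let `A^s` send the first coordinate to `v_s` and copy the block of the
`y`'s, scaled by `β`, so that `A^s x^i = (β y_i, a v_s)` and
`‖A^s x^i - A^t x^j‖² = β² ‖y_i - y_j‖² + a² ‖v_s - v_t‖²`. It then suffices to have `m` points
`y_i` of norm `a` in dimension `r + 1`, `r = min m (d - 2)`, pairwise `1/(4β)` apart (a packing
of the ball of radius `a` in `ℝʳ`, lifted to the sphere by one extra coordinate), and `2^m`
points `v_s` of norm at most `√d` in dimension `h - r - 1 ≥ m`, pairwise `1/(4a)` apart; with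
`β² = d / (r + 1)` the Frobenius norm of `A^s` is `d + ‖v_s‖² ≤ 2d`. Both packings come from the
volume argument: in `ℝⁿ`, fewer than `(R/δ)ⁿ` balls of radius `δ` cannot cover the ball of
radius `R`, so points `δ` apart can be added greedily. The bound `h ≤ e^d` is what makes
`m ≤ √8 ^ (d - 2)` when `r = d - 2`.
-/

open MeasureTheory Metric Module Matrix

section Packing

variable {E : Type*} [NormedAddCommGroup E] [NormedSpace ℝ E] [FiniteDimensional ℝ E]

theorem exists_norm_le_forall_le_dist {R δ : ℝ} (hR : 0 ≤ R) (hδ : 0 < δ) (S : Finset E)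
    (hS : S.card * δ ^ finrank ℝ E < R ^ finrank ℝ E) :
    ∃ z : E, ‖z‖ ≤ R ∧ ∀ y ∈ S, δ ≤ dist z y := by
  borelize E
  set μ : Measure E := Measure.addHaar
  by_contra! hcover
  have hsub : closedBall (0 : E) R ⊆ ⋃ y ∈ S, ball y δ := fun z hz => by
    obtain ⟨y, hy, hzy⟩ := hcover z (mem_closedBall_zero_iff.1 hz)
    exact Set.mem_biUnion hy (mem_ball.2 hzy)
  have hunit₀ : μ (ball 0 1) ≠ 0 := (measure_ball_pos μ _ one_pos).ne'
  have hunit : μ (ball 0 1) ≠ ⊤ := measure_ball_lt_top.ne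
  have hvol : ENNReal.ofReal (R ^ finrank ℝ E) * μ (ball 0 1)
      ≤ ENNReal.ofReal (S.card * δ ^ finrank ℝ E) * μ (ball 0 1) :=
    calc ENNReal.ofReal (R ^ finrank ℝ E) * μ (ball 0 1) = μ (closedBall 0 R) :=
          (Measure.addHaar_closedBall μ 0 hR).symm
      _ ≤ μ (⋃ y ∈ S, ball y δ) := measure_mono hsub
      _ ≤ ∑ y ∈ S, μ (ball y δ) := measure_biUnion_finset_le S _
      _ = ENNReal.ofReal (S.card * δ ^ finrank ℝ E) * μ (ball 0 1) := by
          simp only [Measure.addHaar_ball_of_pos μ _ hδ, Finset.sum_const, nsmul_eq_mul]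
          rw [ENNReal.ofReal_mul (by positivity), ENNReal.ofReal_natCast, mul_assoc]
  have := (ENNReal.ofReal_le_ofReal_iff (by positivity)).1
    ((ENNReal.mul_le_mul_iff_left hunit₀ hunit).1 hvol)
  linarith

theorem exists_finset_norm_le_pairwise_le_dist {R δ : ℝ} (hR : 0 ≤ R) (hδ : 0 < δ) (K : ℕ)
    (hK : (K : ℝ) ≤ (R / δ) ^ finrank ℝ E) :
    ∃ S : Finset E, S.card = K ∧ (∀ y ∈ S, ‖y‖ ≤ R) ∧
      (S : Set E).Pairwise fun y z => δ ≤ dist y z := by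
  classical
  induction K with
  | zero => exact ⟨∅, rfl, by simp, by simp⟩
  | succ K ih =>
    push_cast at hK
    obtain ⟨S, hcard, hnorm, hsep⟩ := ih (by linarith)
    have hroom : S.card * δ ^ finrank ℝ E < R ^ finrank ℝ E := by
      rw [div_pow, le_div_iff₀ (by positivity)] at hK
      rw [hcard]
      nlinarith [pow_pos hδ (finrank ℝ E)]
    obtain ⟨z, hz, hzS⟩ := exists_norm_le_forall_le_dist hR hδ S hroom
    have hzS' : z ∉ S := fun h => by simpa [hδ.not_ge] using hzS z h
    refine ⟨insert z S, by rw [Finset.card_insert_of_notMem hzS', hcard], ?_, ?_⟩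
    · simpa [hz] using hnorm
    · rw [Finset.coe_insert, Set.pairwise_insert]
      exact ⟨hsep, fun y hy _ => ⟨hzS y hy, dist_comm z y ▸ hzS y hy⟩⟩

end Packing

theorem exists_sum_sq_le_and_separated (α ι : Type*) [Fintype α] [Fintype ι] {R δ : ℝ}
    (hR : 0 ≤ R) (hδ : 0 < δ) (hK : (Fintype.card α : ℝ) ≤ (R / δ) ^ Fintype.card ι) :
    ∃ p : α → ι → ℝ, (∀ k, ∑ i, p k i ^ 2 ≤ R ^ 2) ∧
      ∀ k l, k ≠ l → δ ^ 2 ≤ ∑ i, (p k i - p l i) ^ 2 := by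
  obtain ⟨S, hcard, hnorm, hsep⟩ := exists_finset_norm_le_pairwise_le_dist
    (E := EuclideanSpace ℝ ι) hR hδ _ (by rwa [finrank_euclideanSpace])
  let e : α ≃ S := Fintype.equivOfCardEq (by simp [hcard])
  have hsq (y : EuclideanSpace ℝ ι) : ‖y‖ ^ 2 = ∑ i, y i ^ 2 := by
    simp [EuclideanSpace.norm_sq_eq]
  refine ⟨fun k => (e k : EuclideanSpace ℝ ι), fun k => ?_, fun k l hkl => ?_⟩
  · rw [← hsq]
    exact pow_le_pow_left₀ (norm_nonneg _) (hnorm _ (e k).2) 2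
  · have h : δ ≤ ‖(e k : EuclideanSpace ℝ ι) - e l‖ :=
      dist_eq_norm (E := EuclideanSpace ℝ ι) _ _ ▸
        hsep (e k).2 (e l).2 fun h => hkl (e.injective (Subtype.ext h))
    simpa [hsq] using pow_le_pow_left₀ hδ.le h 2

theorem exists_sum_sq_eq_of_sum_sq_le {α ι : Type*} [Fintype ι] {c : ℝ} (w : α → ι → ℝ)
    (hw : ∀ i, ∑ k, w i k ^ 2 ≤ c) :
    ∃ y : α → ι ⊕ Unit → ℝ, (∀ i, ∑ k, y i k ^ 2 = c) ∧
      ∀ i j, ∑ k, (w i k - w j k) ^ 2 ≤ ∑ k, (y i k - y j k) ^ 2 := by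
  refine ⟨fun i => Sum.elim (w i) fun _ => √(c - ∑ k, w i k ^ 2), fun i => ?_, fun i j => ?_⟩
  · simp [Fintype.sum_sum_type, Real.sq_sqrt (sub_nonneg.2 (hw i))]
  · simp only [Fintype.sum_sum_type, Sum.elim_inl, Sum.elim_inr]
    exact le_add_of_nonneg_right (by positivity)

def SeparatedImages {α σ ι κ : Type*} [Fintype ι] [Fintype κ]
    (x : α → ι → ℝ) (A : σ → Matrix κ ι ℝ) (F ε : ℝ) : Prop :=
  (∀ i, ∑ j, (x i j) ^ 2 = 1) ∧
  (∀ s, ∑ i, ∑ j, (A s i j) ^ 2 ≤ F) ∧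
  (∀ s t i j, (s, i) ≠ (t, j) →
    ε ≤ ∑ r, ((A s).mulVec (x i) r - (A t).mulVec (x j) r) ^ 2)

namespace SeparatedImages

variable {α σ ι κ : Type*} [Fintype ι] [Fintype κ]
  {x : α → ι → ℝ} {A : σ → Matrix κ ι ℝ} {F ε : ℝ}

theorem reindex {ι' κ' : Type*} [Fintype ι'] [Fintype κ'] (hxA : SeparatedImages x A F ε)
    (e : ι ≃ ι') (f : κ ≃ κ') :
    SeparatedImages (fun i => x i ∘ e.symm) (fun s => Matrix.reindex f e (A s)) F ε := by
  obtain ⟨hx, hA, hsep⟩ := hxA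
  refine ⟨fun i => ?_, fun s => ?_, fun s t i j hne => ?_⟩
  · exact (e.symm.sum_comp fun j => x i j ^ 2).trans (hx i)
  · calc ∑ i, ∑ j, Matrix.reindex f e (A s) i j ^ 2
          = ∑ i, ∑ j, A s (f.symm i) (e.symm j) ^ 2 := rfl
      _ = ∑ i, ∑ j, A s i j ^ 2 := by
          rw [f.symm.sum_comp fun i => ∑ j, A s i (e.symm j) ^ 2]
          exact Finset.sum_congr rfl fun i _ => e.symm.sum_comp fun j => A s i j ^ 2
      _ ≤ F := hA s
  · have hmul : ∀ s i,
        Matrix.reindex f e (A s) *ᵥ (x i ∘ e.symm) = (A s *ᵥ x i) ∘ f.symm := by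
      intro s i
      simp [Matrix.reindex_apply, Matrix.submatrix_mulVec_equiv, Function.comp_assoc]
    simp only [hmul]
    exact (hsep s t i j hne).trans_eq
      (f.symm.sum_comp fun r => ((A s *ᵥ x i) r - (A t *ᵥ x j) r) ^ 2).symm

theorem padCols (τ : Type*) [Fintype τ] (hxA : SeparatedImages x A F ε) :
    SeparatedImages (fun i => Sum.elim (x i) (0 : τ → ℝ))
      (fun s => fromCols (A s) 0) F ε := by
  obtain ⟨hx, hA, hsep⟩ := hxA
  refine ⟨fun i => ?_, fun s => ?_, fun s t i j hne => ?_⟩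
  · simpa [Fintype.sum_sum_type] using hx i
  · simpa [Fintype.sum_sum_type] using hA s
  · simpa [fromCols_mulVec] using hsep s t i j hne

end SeparatedImages

theorem separatedImages_fromBlocks {α σ ρ τ : Type*} [Fintype ρ] [DecidableEq ρ] [Fintype τ]
    {a β F ε : ℝ} (y : α → ρ → ℝ) (v : σ → τ → ℝ)
    (hy : ∀ i, a ^ 2 + ∑ k, y i k ^ 2 = 1)
    (hv : ∀ s, β ^ 2 * Fintype.card ρ + ∑ k, v s k ^ 2 ≤ F)
    (hy_sep : ∀ i j, i ≠ j → ε ≤ β ^ 2 * ∑ k, (y i k - y j k) ^ 2)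
    (hv_sep : ∀ s t, s ≠ t → ε ≤ a ^ 2 * ∑ k, (v s k - v t k) ^ 2) :
    SeparatedImages (fun i => Sum.elim (fun _ : Unit => a) (y i))
      (fun s => fromBlocks 0 (β • (1 : Matrix ρ ρ ℝ)) (replicateCol Unit (v s)) 0) F ε := by
  have hmul : ∀ s i, fromBlocks 0 (β • (1 : Matrix ρ ρ ℝ)) (replicateCol Unit (v s)) 0 *ᵥ
      Sum.elim (fun _ : Unit => a) (y i) = Sum.elim (β • y i) (a • v s) := by
    intro s i
    ext (k | k) <;> simp [mulVec, dotProduct, one_apply, mul_comm]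
  refine ⟨fun i => ?_, fun s => ?_, fun s t i j hne => ?_⟩
  · simpa [Fintype.sum_sum_type] using hy i
  · simpa [Fintype.sum_sum_type, one_apply, ite_pow, mul_comm] using hv s
  · simp only [hmul, Fintype.sum_sum_type, Sum.elim_inl, Sum.elim_inr, Pi.smul_apply,
      smul_eq_mul, ← mul_sub, mul_pow, ← Finset.mul_sum]
    have hy_nonneg : 0 ≤ β ^ 2 * ∑ k, (y i k - y j k) ^ 2 := by positivity
    have hv_nonneg : 0 ≤ a ^ 2 * ∑ k, (v s k - v t k) ^ 2 := by positivity
    obtain hst | hij : s ≠ t ∨ i ≠ j := by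
      by_contra! h
      exact hne (by rw [h.1, h.2])
    · linarith [hv_sep s t hst]
    · linarith [hy_sep i j hij]

theorem natCast_le_pow_of_sq_le {K k : ℕ} {q : ℝ} (hq : 0 ≤ q)
    (hK : (K : ℝ) ^ 2 ≤ (q ^ 2) ^ k) :
    (K : ℝ) ≤ q ^ k := by
  rw [← pow_mul, mul_comm, pow_mul] at hK
  exact le_of_sq_le_sq hK (by positivity)

theorem exists_separatedImages_of_card_sq_le (α σ : Type*) [Fintype α] [Fintype σ] (r n : ℕ)
    {D : ℝ} (hD : (r : ℝ) + 1 ≤ D) (hα : (Fintype.card α : ℝ) ^ 2 ≤ (8 * D / (r + 1)) ^ r)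
    (hσ : (Fintype.card σ : ℝ) ^ 2 ≤ (8 * D) ^ n) :
    ∃ (x : α → Unit ⊕ (Fin r ⊕ Unit) → ℝ)
      (A : σ → Matrix ((Fin r ⊕ Unit) ⊕ Fin n) (Unit ⊕ (Fin r ⊕ Unit)) ℝ),
      SeparatedImages x A (2 * D) (1 / 16) := by
  have hD0 : 0 < D := by linarith
  set a := √(1 / 2)
  set β := √(D / (r + 1))
  have ha : a ^ 2 = 1 / 2 := Real.sq_sqrt (by norm_num)
  have hβ : β ^ 2 = D / (r + 1) := Real.sq_sqrt (by positivity)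
  have ha0 : 0 < a := by positivity
  have hβ0 : 0 < β := Real.sqrt_pos.2 (by positivity)
  obtain ⟨w, hw_norm, hw_sep⟩ := exists_sum_sq_le_and_separated α (Fin r) ha0.le
    (inv_pos.2 (by positivity : 0 < 4 * β)) (by
      rw [Fintype.card_fin, div_inv_eq_mul]
      refine natCast_le_pow_of_sq_le (by positivity) (hα.trans_eq ?_)
      congr 1; rw [mul_pow, mul_pow, ha, hβ]; ring)
  obtain ⟨y, hy_norm, hy_sep⟩ := exists_sum_sq_eq_of_sum_sq_le w hw_norm
  obtain ⟨v, hv_norm, hv_sep⟩ := exists_sum_sq_le_and_separated σ (Fin n) (Real.sqrt_nonneg D)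
    (inv_pos.2 (by positivity : 0 < 4 * a)) (by
      rw [Fintype.card_fin, div_inv_eq_mul]
      refine natCast_le_pow_of_sq_le (by positivity) (hσ.trans_eq ?_)
      congr 1; rw [mul_pow, mul_pow, ha, Real.sq_sqrt hD0.le]; ring)
  refine ⟨_, _, separatedImages_fromBlocks (a := a) (β := β) y v (fun i => ?_) (fun s => ?_)
    (fun i j hij => ?_) (fun s t hst => ?_)⟩
  · rw [hy_norm, ha]; norm_num
  · have := hv_norm s
    rw [Real.sq_sqrt hD0.le] at this
    rw [hβ, Fintype.card_sum, Fintype.card_fin, Fintype.card_unit]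
    push_cast
    rw [div_mul_cancel₀ _ (by positivity)]
    linarith
  · calc (1 / 16 : ℝ) = β ^ 2 * (4 * β)⁻¹ ^ 2 := by field_simp; ring
      _ ≤ β ^ 2 * ∑ k, (y i k - y j k) ^ 2 :=
        mul_le_mul_of_nonneg_left ((hw_sep i j hij).trans (hy_sep i j)) (by positivity)
  · calc (1 / 16 : ℝ) = a ^ 2 * (4 * a)⁻¹ ^ 2 := by field_simp; ring
      _ ≤ a ^ 2 * ∑ k, (v s k - v t k) ^ 2 :=
        mul_le_mul_of_nonneg_left (hv_sep s t hst) (by positivity)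

theorem sq_le_eight_pow_min {d h m : ℕ} (hhe : (h : ℝ) ≤ Real.exp d) (hm : m = h / 10) :
    (m : ℝ) ^ 2 ≤ 8 ^ min m (d - 2) := by
  rcases min_choice m (d - 2) with hmin | hmin <;> rw [hmin]
  · have h4 : m ^ 2 ≤ 4 ^ m := by
      rw [show 4 ^ m = (2 ^ m) ^ 2 by rw [← pow_mul, mul_comm, pow_mul]; norm_num]
      exact Nat.pow_le_pow_left Nat.lt_two_pow_self.le 2
    exact_mod_cast h4.trans (Nat.pow_le_pow_left (by norm_num) m)
  · have hm10 : (m : ℝ) * 10 ≤ h := by exact_mod_cast hm ▸ Nat.div_mul_le_self h 10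
    have hexp : Real.exp d ^ 2 ≤ 8 ^ d := by
      rw [← Real.exp_one_pow, ← pow_mul, mul_comm, pow_mul]
      exact pow_le_pow_left₀ (by positivity)
        (by nlinarith [Real.exp_one_lt_d9, Real.exp_pos 1]) d
    have h64 : (8 : ℝ) ^ d ≤ 64 * 8 ^ (d - 2) := by
      calc (8 : ℝ) ^ d ≤ 8 ^ (d - 2 + 2) := pow_le_pow_right₀ (by norm_num) (by omega)
        _ = 64 * 8 ^ (d - 2) := by rw [pow_add]; ring
    have hh : (h : ℝ) ^ 2 ≤ Real.exp d ^ 2 := pow_le_pow_left₀ (by positivity) hhe 2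
    nlinarith [pow_pos (show (0 : ℝ) < 8 by norm_num) (d - 2)]

/-- Existence of well-separated images: for `d ≥ 20` and `d ≤ h ≤ e^d`, with
`m = h / 10`, there are unit vectors `x¹,…,x^m` and matrices `A¹,…,A^{2^m}` of
Frobenius norm squared at most `2d` whose images `A^s x^i` are pairwise
`1/4`-separated. -/
theorem exists_separated_points
    (d h m : ℕ) (hd : 20 ≤ d) (hdh : d ≤ h) (hhe : (h : ℝ) ≤ Real.exp d)
    (hm : m = h / 10) :
    ∃ (x : Fin m → Fin d → ℝ) (A : Fin (2 ^ m) → Matrix (Fin h) (Fin d) ℝ),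
      (∀ i, ∑ j, (x i j) ^ 2 = 1) ∧
      (∀ s, ∑ i, ∑ j, (A s i j) ^ 2 ≤ 2 * d) ∧
      (∀ (s t : Fin (2 ^ m)) (i j : Fin m), (s, i) ≠ (t, j) →
        (1 : ℝ) / 16 ≤ ∑ r, ((A s).mulVec (x i) r - (A t).mulVec (x j) r) ^ 2) := by
  set r := min m (d - 2)
  have hrd : r + 2 ≤ d := by omega
  have hmr : m ≤ h - (r + 1) := by omega
  have hD : (r : ℝ) + 1 ≤ d := by exact_mod_cast (by omega : r + 1 ≤ d)
  have hα : (m : ℝ) ^ 2 ≤ (8 * d / (r + 1)) ^ r := by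
    refine (sq_le_eight_pow_min hhe hm).trans (pow_le_pow_left₀ (by norm_num) ?_ r)
    rw [le_div_iff₀ (by positivity)]
    linarith
  have hσ : ((2 ^ m : ℕ) : ℝ) ^ 2 ≤ (8 * d) ^ (h - (r + 1)) := by
    calc ((2 ^ m : ℕ) : ℝ) ^ 2 = 4 ^ m := by
          push_cast; rw [← pow_mul, mul_comm, pow_mul]; norm_num
      _ ≤ 4 ^ (h - (r + 1)) := pow_le_pow_right₀ (by norm_num) hmr
      _ ≤ (8 * d) ^ (h - (r + 1)) := pow_le_pow_left₀ (by norm_num) (by linarith) _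
  obtain ⟨x, A, hxA⟩ := exists_separatedImages_of_card_sq_le (Fin m) (Fin (2 ^ m)) r
    (h - (r + 1)) hD (by simpa using hα) (by simpa using hσ)
  exact ⟨_, _, (hxA.padCols (Fin (d - (r + 2)))).reindex
    (Fintype.equivOfCardEq (by simp; omega)) (Fintype.equivOfCardEq (by simp; omega))⟩
end
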